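/- arXiv:1504.08068 — 5 statements merged into one kernel-verified Lean document; each statement's English description precedes it below -/
import Mathlib

section
/- For fixed z > 0, the function τ ↦ ((1-τ)/2)·log₂(1 + βτ/(1-τ)) with β = 2ηPz/N₀ attains its maximum over τ ∈ (0,1) at τ̂ = (e^{W((β-1)/e)+1} − 1)/(β + e^{W((β-1)/e)+1} − 1), where W is the Lambert W function (principal branch). -/
/-!
Put `A = e^{W+1}`, so that `W·A = β - 1` and `log A = W + 1`. The tangent line of `log` at `A`
gives `log x ≤ x / A + W`; with `x = 1 + βτ/(1-τ)`, so that `(1-τ)·x = 1 - τ + βτ`, this bounds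
`(1-τ)·log x` by `β / A` for every `τ ∈ (0,1)`. At `τ̂ = (A-1)/(β+A-1)` we have `x = A`, and the
bound is attained.
-/

open Real Set

noncomputable def rate (β τ : ℝ) : ℝ := (1 - τ) / 2 * logb 2 (1 + β * τ / (1 - τ))

lemma rate_eq (β τ : ℝ) : rate β τ = (1 - τ) * log (1 + β * τ / (1 - τ)) / (2 * log 2) := by
  rw [rate, logb]; ring

lemma log_le_div_exp_add {x : ℝ} (hx : 0 < x) (w : ℝ) : log x ≤ x / exp (w + 1) + w := by
  have h := log_le_sub_one_of_pos (div_pos hx (exp_pos (w + 1)))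
  rw [log_div hx.ne' (exp_pos _).ne', log_exp] at h
  linarith

lemma one_sub_mul_log_le {β τ : ℝ} (hβ : 0 < β) (hτ : τ ∈ Ioo 0 1) (w : ℝ) :
    (1 - τ) * log (1 + β * τ / (1 - τ)) ≤ (1 - τ + β * τ) / exp (w + 1) + (1 - τ) * w := by
  obtain ⟨h0, h1⟩ := hτ
  have h1τ : 0 < 1 - τ := by linarith
  have hx : 0 < 1 + β * τ / (1 - τ) := by positivity
  calc (1 - τ) * log (1 + β * τ / (1 - τ))
      ≤ (1 - τ) * ((1 + β * τ / (1 - τ)) / exp (w + 1) + w) :=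
        mul_le_mul_of_nonneg_left (log_le_div_exp_add hx w) h1τ.le
    _ = (1 - τ + β * τ) / exp (w + 1) + (1 - τ) * w := by field_simp

lemma rate_le_of_mul_exp_eq {β τ w : ℝ} (hβ : 0 < β) (hτ : τ ∈ Ioo 0 1)
    (hw : w * exp (w + 1) = β - 1) : rate β τ ≤ β / exp (w + 1) / (2 * log 2) := by
  rw [rate_eq]
  gcongr
  calc (1 - τ) * log (1 + β * τ / (1 - τ))
      ≤ (1 - τ + β * τ) / exp (w + 1) + (1 - τ) * w := one_sub_mul_log_le hβ hτ w
    _ = β / exp (w + 1) := by field_simp; linear_combination (1 - τ) * hw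

lemma div_add_sub_one_mem_Ioo {β A : ℝ} (hβ : 0 < β) (hA : 1 < A) :
    (A - 1) / (β + A - 1) ∈ Ioo 0 1 :=
  ⟨by apply div_pos <;> linarith, (div_lt_one (by linarith)).mpr (by linarith)⟩

lemma rate_div_add_sub_one {β A : ℝ} (hβ : 0 < β) (hA : 1 < A) :
    rate β ((A - 1) / (β + A - 1)) = β * log A / (β + A - 1) / (2 * log 2) := by
  have hD : β + A - 1 ≠ 0 := by linarith
  have h1τ : 1 - (A - 1) / (β + A - 1) = β / (β + A - 1) := by field_simp; ring
  have hx : 1 + β * ((A - 1) / (β + A - 1)) / (1 - (A - 1) / (β + A - 1)) = A := by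
    rw [h1τ]; field_simp; ring
  rw [rate_eq, hx, h1τ]
  ring

lemma lambert_mul_exp_add_one {β w : ℝ} (hw : w * exp w = (β - 1) / exp 1) :
    w * exp (w + 1) = β - 1 := by
  rw [exp_add, ← mul_assoc, hw]
  field_simp

lemma neg_one_lt_of_mul_exp_add_one_eq {β w : ℝ} (hβ : 0 < β) (hw1 : -1 ≤ w)
    (hw : w * exp (w + 1) = β - 1) : -1 < w := by
  rcases hw1.eq_or_lt with rfl | h
  · norm_num at hw; linarith
  · exact h

/-- For β > 0, the function τ ↦ ((1-τ)/2)·log₂(1 + βτ/(1-τ)) attains its maximum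
over (0,1) at τopt = (e^{W((β-1)/e)+1} − 1)/(β + e^{W((β-1)/e)+1} − 1), where W is the
principal branch of the Lambert W function (characterized by W·e^W = (β-1)/e, W ≥ -1). -/
theorem optimal_tau {β : ℝ} (hβ : 0 < β) (Wv : ℝ)
    (hW : Wv * Real.exp Wv = (β - 1) / Real.exp 1) (hW1 : -1 ≤ Wv) :
    (Real.exp (Wv + 1) - 1) / (β + Real.exp (Wv + 1) - 1) ∈ Set.Ioo (0:ℝ) 1 ∧
    ∀ τ ∈ Set.Ioo (0:ℝ) 1,
      ((1 - τ) / 2) * Real.logb 2 (1 + β * τ / (1 - τ)) ≤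
      (let τopt := (Real.exp (Wv + 1) - 1) / (β + Real.exp (Wv + 1) - 1);
        ((1 - τopt) / 2) * Real.logb 2 (1 + β * τopt / (1 - τopt))) := by
  have hkey := lambert_mul_exp_add_one hW
  have hWv := neg_one_lt_of_mul_exp_add_one_eq hβ hW1 hkey
  have hA : 1 < exp (Wv + 1) := one_lt_exp_iff.mpr (by linarith)
  have hopt : rate β ((exp (Wv + 1) - 1) / (β + exp (Wv + 1) - 1))
      = β / exp (Wv + 1) / (2 * log 2) := by
    have hD : β + exp (Wv + 1) - 1 = (Wv + 1) * exp (Wv + 1) := by linear_combination -hkey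
    have hWv1 : Wv + 1 ≠ 0 := by linarith
    rw [rate_div_add_sub_one hβ hA, log_exp, hD]
    field_simp
  refine ⟨div_add_sub_one_mem_Ioo hβ hA, fun τ hτ => ?_⟩
  show rate β τ ≤ rate β _
  rw [hopt]
  exact rate_le_of_mul_exp_eq hβ hτ hkey
end

section
/- Suppose a, b, c > 0 and c ≥ (a² + b²)/a. Then the maximum over x ∈ [0,1] of min(a·x + b·√(1 − x²), c·x) is √(a² + b²), attained at x = a/√(a² + b²). -/
/-- Case 1: if a, b, c > 0 and c ≥ (a²+b²)/a, then the maximum over x ∈ [0,1] of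
min(a·x + b·√(1−x²), c·x) is √(a²+b²), attained at x = a/√(a²+b²). -/
theorem case1_max {a b c : ℝ} (ha : 0 < a) (hb : 0 < b) (hc : 0 < c)
    (h : (a ^ 2 + b ^ 2) / a ≤ c) :
    a / Real.sqrt (a ^ 2 + b ^ 2) ∈ Set.Icc (0:ℝ) 1 ∧
    (∀ x ∈ Set.Icc (0:ℝ) 1,
      min (a * x + b * Real.sqrt (1 - x ^ 2)) (c * x) ≤ Real.sqrt (a ^ 2 + b ^ 2)) ∧
    min (a * (a / Real.sqrt (a ^ 2 + b ^ 2)) +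
          b * Real.sqrt (1 - (a / Real.sqrt (a ^ 2 + b ^ 2)) ^ 2))
        (c * (a / Real.sqrt (a ^ 2 + b ^ 2))) = Real.sqrt (a ^ 2 + b ^ 2) := by
  set s := Real.sqrt (a ^ 2 + b ^ 2) with hs
  have hsum : (0:ℝ) < a ^ 2 + b ^ 2 := by positivity
  have hspos : 0 < s := Real.sqrt_pos.mpr hsum
  have hssq : s ^ 2 = a ^ 2 + b ^ 2 := Real.sq_sqrt hsum.le
  have hale : a ≤ s := by nlinarith [sq_nonneg (s - a)]
  have hx0 : a / s ∈ Set.Icc (0:ℝ) 1 := by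
    constructor
    · positivity
    · exact (div_le_one hspos).mpr hale
  refine ⟨hx0, ?_, ?_⟩
  · intro x hx
    obtain ⟨hx0', hx1⟩ := hx
    refine le_trans (min_le_left _ _) ?_
    have h1 : 0 ≤ 1 - x ^ 2 := by nlinarith
    have hr : Real.sqrt (1 - x ^ 2) ^ 2 = 1 - x ^ 2 := Real.sq_sqrt h1
    have hrn : 0 ≤ Real.sqrt (1 - x ^ 2) := Real.sqrt_nonneg _
    nlinarith [sq_nonneg (a * Real.sqrt (1 - x ^ 2) - b * x), sq_nonneg (b * Real.sqrt (1 - x ^ 2) - a * x)]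
  · have hsq : 1 - (a / s) ^ 2 = (b / s) ^ 2 := by
      field_simp
      nlinarith
    have hroot : Real.sqrt (1 - (a / s) ^ 2) = b / s := by
      rw [hsq, Real.sqrt_sq (by positivity)]
    have hval : a * (a / s) + b * Real.sqrt (1 - (a / s) ^ 2) = s := by
      rw [hroot]; field_simp; nlinarith
    have hca : a ^ 2 + b ^ 2 ≤ c * a := (div_le_iff₀ ha).mp h
    have hcx : s ≤ c * (a / s) := by
      rw [← mul_div_assoc, le_div_iff₀ hspos]
      nlinarith
    rw [hval, min_eq_left hcx]
end

section
/- Suppose a, b, c > 0 and a ≤ c < (a² + b²)/a. Then the maximum over x ∈ [0,1] of min(a·x + b·√(1 − x²), c·x) is attained at x = b/√((a−c)² + b²), with maximum value c·b/√((a−c)² + b²). -/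
/-- Key lemma: on the unit circle, if `p ≤ x` and `a*q ≤ b*p`, then
`a*x + b*y ≤ a*p + b*q`. -/
lemma case2_key {a b p q x y : ℝ} (ha : 0 < a) (hb : 0 < b) (hp : 0 < p)
    (hq : 0 ≤ q) (hy : 0 ≤ y) (hcirc : p ^ 2 + q ^ 2 = 1)
    (hcirc2 : x ^ 2 + y ^ 2 = 1) (hxp : p ≤ x) (haq : a * q ≤ b * p) :
    a * x + b * y ≤ a * p + b * q := by
  have hxpos : 0 < x := lt_of_lt_of_le hp hxp
  have hx2 : p ^ 2 ≤ x ^ 2 := by nlinarith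
  have hy2 : y ^ 2 ≤ q ^ 2 := by linarith
  have hyq : y ≤ q := by nlinarith
  have hbx : a * y ≤ b * x := by
    calc a * y ≤ a * q := by nlinarith
    _ ≤ b * p := haq
    _ ≤ b * x := by nlinarith
  have hP : 0 ≤ (q - y) * (b * (x + p) - a * (q + y)) := by
    apply mul_nonneg (by linarith)
    nlinarith
  nlinarith [mul_pos (add_pos hxpos hp) hb]

/-- Case 2: if a, b, c > 0 and a ≤ c < (a²+b²)/a, then the maximum over x ∈ [0,1] of
min(a·x + b·√(1−x²), c·x) is attained at x = b/√((a−c)²+b²), with value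
c·b/√((a−c)²+b²). -/
theorem case2_max {a b c : ℝ} (ha : 0 < a) (hb : 0 < b) (hc : 0 < c)
    (h1 : a ≤ c) (h2 : c < (a ^ 2 + b ^ 2) / a) :
    b / Real.sqrt ((a - c) ^ 2 + b ^ 2) ∈ Set.Icc (0:ℝ) 1 ∧
    (∀ x ∈ Set.Icc (0:ℝ) 1,
      min (a * x + b * Real.sqrt (1 - x ^ 2)) (c * x) ≤
        c * (b / Real.sqrt ((a - c) ^ 2 + b ^ 2))) ∧
    min (a * (b / Real.sqrt ((a - c) ^ 2 + b ^ 2)) +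
          b * Real.sqrt (1 - (b / Real.sqrt ((a - c) ^ 2 + b ^ 2)) ^ 2))
        (c * (b / Real.sqrt ((a - c) ^ 2 + b ^ 2))) =
      c * (b / Real.sqrt ((a - c) ^ 2 + b ^ 2)) := by
  set s := Real.sqrt ((a - c) ^ 2 + b ^ 2) with hs_def
  have hs : 0 < s := Real.sqrt_pos.2 (by positivity)
  have hs2 : s ^ 2 = (a - c) ^ 2 + b ^ 2 := Real.sq_sqrt (by positivity)
  set p := b / s with hp_def
  set q := (c - a) / s with hq_def
  have hp : 0 < p := by positivity
  have hq : 0 ≤ q := div_nonneg (by linarith) hs.le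
  have hcirc : p ^ 2 + q ^ 2 = 1 := by
    rw [hp_def, hq_def]
    field_simp
    nlinarith
  have hsqrt : Real.sqrt (1 - p ^ 2) = q := by
    rw [show 1 - p ^ 2 = q ^ 2 by linarith]
    exact Real.sqrt_sq hq
  have heq : a * p + b * q = c * p := by
    rw [hp_def, hq_def]; field_simp; ring
  have hca : a * (c - a) ≤ b ^ 2 := by
    have := (lt_div_iff₀ ha).1 h2
    nlinarith
  have haq : a * q ≤ b * p := by
    rw [hp_def, hq_def, ← mul_div_assoc, ← mul_div_assoc]
    exact (div_le_div_iff_of_pos_right hs).2 (by nlinarith)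
  have hble : b ≤ s := by
    have : Real.sqrt (b ^ 2) ≤ s := Real.sqrt_le_sqrt (by nlinarith [sq_nonneg (a - c)])
    rwa [Real.sqrt_sq hb.le] at this
  have hp1 : p ≤ 1 := (div_le_one hs).2 hble
  refine ⟨⟨hp.le, hp1⟩, ?_, ?_⟩
  · intro x hx
    obtain ⟨hx0, hx1⟩ := hx
    set y := Real.sqrt (1 - x ^ 2) with hy_def
    have hy : 0 ≤ y := Real.sqrt_nonneg _
    have hy2 : y ^ 2 = 1 - x ^ 2 := Real.sq_sqrt (by nlinarith)
    rcases le_or_gt x p with hxp | hxp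
    · calc min (a * x + b * y) (c * x) ≤ c * x := min_le_right _ _
        _ ≤ c * p := by nlinarith
    · calc min (a * x + b * y) (c * x) ≤ a * x + b * y := min_le_left _ _
        _ ≤ a * p + b * q := case2_key ha hb hp hq hy hcirc (by linarith) hxp.le haq
        _ = c * p := heq
  · rw [hsqrt, heq, min_self]
end

section
/- For a, b, c > 0, the maximum over x ∈ [0,1] of g(x) = min(a·x + b·√(1−x²), c·x) is attained at x̄ given by: x̄ = a/√(a²+b²) if c ≥ (a²+b²)/a; x̄ = b/√((a−c)²+b²) if a ≤ c < (a²+b²)/a; and x̄ = 1 if c < a. -/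
private lemma cauchy_aux {u v x s : ℝ} (hu : 0 ≤ u) (hv : 0 ≤ v)
    (hx : 0 ≤ x) (hs : 0 ≤ s) (h1 : x^2 + s^2 = 1) :
    u * x + v * s ≤ Real.sqrt (u^2 + v^2) := by
  have h2 : (u*x + v*s)^2 ≤ u^2 + v^2 := by nlinarith [sq_nonneg (u*s - v*x)]
  calc u*x + v*s = Real.sqrt ((u*x+v*s)^2) := (Real.sqrt_sq (by positivity)).symm
    _ ≤ Real.sqrt (u^2+v^2) := Real.sqrt_le_sqrt h2

set_option maxHeartbeats 1000000 in
/-- For a, b, c > 0, the maximum over [0,1] of g(x) = min(a·x + b·√(1−x²), c·x) is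
attained at xbar = a/√(a²+b²) if c ≥ (a²+b²)/a, xbar = b/√((a−c)²+b²) if a ≤ c < (a²+b²)/a,
and xbar = 1 if c < a. -/
theorem opt_xbar {a b c : ℝ} (ha : 0 < a) (hb : 0 < b) (hc : 0 < c) :
    let xbar : ℝ :=
      if (a ^ 2 + b ^ 2) / a ≤ c then a / Real.sqrt (a ^ 2 + b ^ 2)
      else if a ≤ c then b / Real.sqrt ((a - c) ^ 2 + b ^ 2)
      else 1
    xbar ∈ Set.Icc (0:ℝ) 1 ∧
    ∀ x ∈ Set.Icc (0:ℝ) 1,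
      min (a * x + b * Real.sqrt (1 - x ^ 2)) (c * x) ≤
      min (a * xbar + b * Real.sqrt (1 - xbar ^ 2)) (c * xbar) := by
  by_cases h1 : (a ^ 2 + b ^ 2) / a ≤ c
  · simp only [if_pos h1]
    set r := Real.sqrt (a ^ 2 + b ^ 2) with hr
    have hr2 : r ^ 2 = a ^ 2 + b ^ 2 := Real.sq_sqrt (by positivity)
    have hrpos : 0 < r := Real.sqrt_pos.mpr (by positivity)
    have har : a ≤ r := by nlinarith
    have hsq : Real.sqrt (1 - (a / r) ^ 2) = b / r := by
      have h : 1 - (a / r) ^ 2 = (b / r) ^ 2 := by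
        field_simp; nlinarith
      rw [h, Real.sqrt_sq (by positivity)]
    have hca : (a ^ 2 + b ^ 2) ≤ c * a := by
      rw [div_le_iff₀ ha] at h1; linarith
    constructor
    · exact ⟨by positivity, by rw [div_le_one hrpos]; exact har⟩
    · intro x hx
      have hRf : a * (a / r) + b * Real.sqrt (1 - (a / r) ^ 2) = r := by
        rw [hsq]; field_simp; nlinarith
      have hRc : r ≤ c * (a / r) := by
        rw [show c * (a / r) = c * a / r by ring, le_div_iff₀ hrpos]; nlinarith
      have hs0 : 0 ≤ Real.sqrt (1 - x ^ 2) := Real.sqrt_nonneg _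
      have hs2 : x ^ 2 + Real.sqrt (1 - x ^ 2) ^ 2 = 1 := by
        rw [Real.sq_sqrt (by nlinarith [hx.1, hx.2] : (0:ℝ) ≤ 1 - x ^ 2)]; ring
      have hf : a * x + b * Real.sqrt (1 - x ^ 2) ≤ r :=
        cauchy_aux ha.le hb.le hx.1 hs0 hs2
      refine le_trans (min_le_left _ _) (le_trans hf (le_min ?_ ?_))
      · rw [hRf]
      · exact hRc
  · by_cases h2 : a ≤ c
    · simp only [if_neg h1, if_pos h2]
      push_neg at h1
      have hca : c * a < a ^ 2 + b ^ 2 := by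
        rw [lt_div_iff₀ ha] at h1; linarith
      set d := c - a with hd
      have hd0 : 0 ≤ d := by linarith
      have hadb : a * d < b ^ 2 := by nlinarith
      have hac : (a - c) ^ 2 + b ^ 2 = d ^ 2 + b ^ 2 := by rw [hd]; ring
      rw [hac]
      set r := Real.sqrt (d ^ 2 + b ^ 2) with hr
      have hr2 : r ^ 2 = d ^ 2 + b ^ 2 := Real.sq_sqrt (by positivity)
      have hrpos : 0 < r := Real.sqrt_pos.mpr (by positivity)
      have hbr : b ≤ r := by nlinarith
      have hbd : 1 - (b / r) ^ 2 = (d / r) ^ 2 := by field_simp; nlinarith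
      have hsq : Real.sqrt (1 - (b / r) ^ 2) = d / r := by
        rw [hbd, Real.sqrt_sq (by positivity)]
      have hRf : a * (b / r) + b * Real.sqrt (1 - (b / r) ^ 2) = b * c / r := by
        rw [hsq]; field_simp; ring
      have hRc : c * (b / r) = b * c / r := by ring
      constructor
      · exact ⟨by positivity, by rw [div_le_one hrpos]; exact hbr⟩
      · intro x hx
        rw [hRf, hRc, min_self]
        rcases le_or_gt (c * x) (b * c / r) with hcx | hcx
        · exact le_trans (min_le_right _ _) hcx
        · have hxgt : b / r ≤ x := by
            have : c * (b / r) < c * x := by rw [hRc]; exact hcx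
            exact le_of_lt ((mul_lt_mul_iff_right₀ hc).mp this)
          set s := Real.sqrt (1 - x ^ 2) with hs
          have hs0 : 0 ≤ s := Real.sqrt_nonneg _
          have hs2 : x ^ 2 + s ^ 2 = 1 := by
            rw [hs, Real.sq_sqrt (by nlinarith [hx.1, hx.2] : (0:ℝ) ≤ 1 - x ^ 2)]; ring
          have hsle : s ≤ d / r := by
            have hx2 : (b / r) ^ 2 ≤ x ^ 2 := by
              apply pow_le_pow_left₀ (by positivity) hxgt
            have h3 : 1 - x ^ 2 ≤ (d / r) ^ 2 := by linarith
            calc s ≤ Real.sqrt ((d / r) ^ 2) := Real.sqrt_le_sqrt h3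
              _ = d / r := Real.sqrt_sq (by positivity)
          have hkey : b * x + d * s ≤ r := by
            have := cauchy_aux hb.le hd0 hx.1 hs0 hs2
            rwa [show b ^ 2 + d ^ 2 = d ^ 2 + b ^ 2 by ring, ← hr] at this
          have hsr : s * r ≤ d := (le_div_iff₀ hrpos).mp hsle
          have hmain : a * x + b * s ≤ b * c / r := by
            rw [le_div_iff₀ hrpos]
            have hmul : b * ((a * x + b * s) * r) ≤ b * (b * c) := by
              nlinarith [mul_nonneg (mul_nonneg ha.le hrpos.le)
                (sub_nonneg.mpr hkey),
                mul_nonneg (sub_nonneg.mpr hsr) (sub_nonneg.mpr hadb.le)]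
            exact le_of_mul_le_mul_left hmul hb
          exact le_trans (min_le_left _ _) hmain
    · simp only [if_neg h1, if_neg h2]
      push_neg at h2
      constructor
      · exact ⟨zero_le_one, le_refl 1⟩
      · intro x hx
        have h0 : Real.sqrt (1 - (1:ℝ) ^ 2) = 0 := by norm_num
        rw [h0]
        have hle : min (a * 1 + b * 0) (c * 1) = c := by
          rw [min_eq_right (by linarith)]; ring
        rw [hle]
        refine le_trans (min_le_right _ _) ?_
        nlinarith [hx.2]
end

section
/- The function R(τ) = ((1−τ)/2)·log₂(1 + βτ/(1−τ)), β > 0, is strictly concave on (0,1) and satisfies lim_{τ→0⁺} R(τ) = 0 and lim_{τ→1⁻} R(τ) = 0, hence attains a unique interior maximum. -/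
/-!
On `(0,1)`, `2 log 2 · R(τ) = (1-τ) log (1 + (β-1)τ) - (1-τ) log (1-τ)`, whose second derivative
`-β² / ((1 + (β-1)τ)² (1-τ))` is negative. `R` is continuous at `0` with `R 0 = 0`, and as `τ → 1⁻`
both terms tend to `0` because `x log x → 0`. A continuous function on an open interval with equal
limits at both ends has an interior extremum; strict concavity rules out an interior minimum and
forbids two distinct maxima.
-/

open Real Filter Set Topology

section Concave

lemma StrictConcaveOn.const_mul {E : Type*} [AddCommMonoid E] [SMul ℝ E] {s : Set E}
    {f : E → ℝ} {c : ℝ} (hc : 0 < c) (hf : StrictConcaveOn ℝ s f) :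
    StrictConcaveOn ℝ s fun x => c * f x :=
  ⟨hf.1, fun _ hx _ hy hxy _ _ ha hb hab => by
    simpa only [smul_eq_mul, mul_add, mul_left_comm c] using
      mul_lt_mul_of_pos_left (hf.2 hx hy hxy ha hb hab) hc⟩

lemma strictConcaveOn_of_hasDerivAt2_neg {D : Set ℝ} (hD : Convex ℝ D) (hDo : IsOpen D)
    {f f' f'' : ℝ → ℝ} (hf : ∀ x ∈ D, HasDerivAt f (f' x) x)
    (hf' : ∀ x ∈ D, HasDerivAt f' (f'' x) x) (hf'' : ∀ x ∈ D, f'' x < 0) :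
    StrictConcaveOn ℝ D f := by
  have hanti : StrictAntiOn f' D :=
    strictAntiOn_of_hasDerivWithinAt_neg hD
      (fun x hx => (hf' x hx).continuousAt.continuousWithinAt)
      (fun x hx => (hf' x (interior_subset hx)).hasDerivWithinAt)
      (fun x hx => hf'' x (interior_subset hx))
  refine StrictAntiOn.strictConcaveOn_of_deriv hD
    (fun x hx => (hf x hx).continuousAt.continuousWithinAt) ?_
  rw [hDo.interior_eq]
  exact hanti.congr fun x hx => ((hf x hx).deriv).symm

variable {f : ℝ → ℝ} {a b : ℝ}

lemma StrictConcaveOn.not_isMinOn_Ioo (hf : StrictConcaveOn ℝ (Ioo a b) f) {c : ℝ}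
    (hc : c ∈ Ioo a b) : ¬IsMinOn f (Ioo a b) c := by
  intro hmin
  obtain ⟨x, hax, hxc⟩ := exists_between hc.1
  obtain ⟨y, hcy, hyb⟩ := exists_between hc.2
  have hx : x ∈ Ioo a b := ⟨hax, hxc.trans hc.2⟩
  have hy : y ∈ Ioo a b := ⟨hc.1.trans hcy, hyb⟩
  have hlt := hf.lt_on_openSegment hx hy (hxc.trans hcy).ne
    (Ioo_subset_openSegment ⟨hxc, hcy⟩)
  exact hlt.not_ge (le_min (hmin hx) (hmin hy))

lemma StrictConcaveOn.existsUnique_isMaxOn_Ioo_of_tendsto (hab : a < b)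
    (hf : StrictConcaveOn ℝ (Ioo a b) f) {l : ℝ} (ha : Tendsto f (𝓝[>] a) (𝓝 l))
    (hb : Tendsto f (𝓝[<] b) (𝓝 l)) :
    ∃! c, c ∈ Ioo a b ∧ IsMaxOn f (Ioo a b) c := by
  obtain ⟨c, hc, hextr⟩ := exists_isExtrOn_Ioo_of_tendsto hab
    (hf.concaveOn.continuousOn isOpen_Ioo) ha hb
  have hmax : IsMaxOn f (Ioo a b) c := hextr.resolve_left (hf.not_isMinOn_Ioo hc)
  exact ⟨c, ⟨hc, hmax⟩, fun d ⟨hd, hdmax⟩ => hf.eq_of_isMaxOn hdmax hmax hd hc⟩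

end Concave

/-- The rate `R` measured in nats and without the factor `1/2`. -/
noncomputable def rateNats (β τ : ℝ) : ℝ := (1 - τ) * log (1 + β * τ / (1 - τ))

section rateNats

variable {β τ : ℝ}

lemma one_add_div_one_sub_eq (hτ : τ ≠ 1) :
    1 + β * τ / (1 - τ) = (1 + (β - 1) * τ) / (1 - τ) := by
  field_simp [sub_ne_zero.2 hτ.symm]
  ring

lemma one_add_sub_one_mul_pos (hβ : 0 < β) (hτ : τ ∈ Ioo (0 : ℝ) 1) :
    0 < 1 + (β - 1) * τ := by
  nlinarith [hτ.1, hτ.2]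

lemma hasDerivAt_one_add_div_one_sub (hτ : τ ≠ 1) :
    HasDerivAt (fun t => 1 + β * t / (1 - t)) (β / (1 - τ) ^ 2) τ := by
  have hB : 1 - τ ≠ 0 := sub_ne_zero.2 hτ.symm
  have h := (((hasDerivAt_id' τ).const_mul β).div ((hasDerivAt_id' τ).const_sub 1) hB).const_add 1
  refine h.congr_deriv ?_
  field_simp
  ring

lemma hasDerivAt_rateNats (hβ : 0 < β) (hτ : τ ∈ Ioo (0 : ℝ) 1) :
    HasDerivAt (rateNats β) (β / (1 + (β - 1) * τ) - log (1 + β * τ / (1 - τ))) τ := by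
  have hA := one_add_sub_one_mul_pos hβ hτ
  have hB : 1 - τ ≠ 0 := sub_ne_zero.2 hτ.2.ne'
  have hu : 1 + β * τ / (1 - τ) ≠ 0 := by
    rw [one_add_div_one_sub_eq hτ.2.ne]; exact div_ne_zero hA.ne' hB
  have h := ((hasDerivAt_id' τ).const_sub 1).mul
    ((hasDerivAt_one_add_div_one_sub (β := β) hτ.2.ne).log hu)
  refine h.congr_deriv ?_
  rw [one_add_div_one_sub_eq hτ.2.ne]
  field_simp
  ring

lemma hasDerivAt_deriv_rateNats (hβ : 0 < β) (hτ : τ ∈ Ioo (0 : ℝ) 1) :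
    HasDerivAt (fun t => β / (1 + (β - 1) * t) - log (1 + β * t / (1 - t)))
      (-β ^ 2 / ((1 + (β - 1) * τ) ^ 2 * (1 - τ))) τ := by
  have hA := one_add_sub_one_mul_pos hβ hτ
  have hB : 1 - τ ≠ 0 := sub_ne_zero.2 hτ.2.ne'
  have hu : 1 + β * τ / (1 - τ) ≠ 0 := by
    rw [one_add_div_one_sub_eq hτ.2.ne]; exact div_ne_zero hA.ne' hB
  have hdA : HasDerivAt (fun t => 1 + (β - 1) * t) (β - 1) τ := by
    simpa using ((hasDerivAt_id' τ).const_mul (β - 1)).const_add 1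
  have h := ((hasDerivAt_const τ β).div hdA hA.ne').sub
    ((hasDerivAt_one_add_div_one_sub (β := β) hτ.2.ne).log hu)
  refine h.congr_deriv ?_
  rw [one_add_div_one_sub_eq hτ.2.ne]
  field_simp
  ring

lemma strictConcaveOn_rateNats (hβ : 0 < β) : StrictConcaveOn ℝ (Ioo 0 1) (rateNats β) :=
  strictConcaveOn_of_hasDerivAt2_neg (convex_Ioo 0 1) isOpen_Ioo
    (fun _ hτ => hasDerivAt_rateNats hβ hτ) (fun _ hτ => hasDerivAt_deriv_rateNats hβ hτ)
    fun _ hτ => div_neg_of_neg_of_pos (neg_neg_of_pos (pow_pos hβ 2))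
      (mul_pos (pow_pos (one_add_sub_one_mul_pos hβ hτ) 2) (sub_pos.2 hτ.2))

lemma tendsto_rateNats_nhdsGT_zero (β : ℝ) : Tendsto (rateNats β) (𝓝[>] 0) (𝓝 0) := by
  have hcont : ContinuousAt (rateNats β) 0 := by
    unfold rateNats
    fun_prop (disch := norm_num)
  simpa [rateNats] using hcont.tendsto.mono_left nhdsWithin_le_nhds

lemma tendsto_rateNats_nhdsLT_one (hβ : 0 < β) : Tendsto (rateNats β) (𝓝[<] 1) (𝓝 0) := by
  have hsplit : (fun τ => (1 - τ) * log (1 + (β - 1) * τ) - (1 - τ) * log (1 - τ))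
      =ᶠ[𝓝[<] 1] rateNats β := by
    filter_upwards [Ioo_mem_nhdsLT zero_lt_one] with τ hτ
    rw [rateNats, one_add_div_one_sub_eq hτ.2.ne,
      log_div (one_add_sub_one_mul_pos hβ hτ).ne' (sub_pos.2 hτ.2).ne', mul_sub]
  refine Tendsto.congr' hsplit ?_
  have hA : (1 : ℝ) + (β - 1) * 1 ≠ 0 := by ring_nf; exact hβ.ne'
  have h₁ : ContinuousAt (fun τ => (1 - τ) * log (1 + (β - 1) * τ)) 1 := by
    fun_prop (disch := exact hA)
  have h₂ : Tendsto (fun τ : ℝ => 1 - τ) (𝓝[<] 1) (𝓝 0) := by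
    have : ContinuousAt (fun τ : ℝ => 1 - τ) 1 := by fun_prop
    simpa using this.tendsto.mono_left nhdsWithin_le_nhds
  have h₃ := (continuous_mul_log.tendsto 0).comp h₂
  simpa using (h₁.tendsto.mono_left nhdsWithin_le_nhds).sub h₃

end rateNats

/-- R(τ) = ((1−τ)/2)·log₂(1 + βτ/(1−τ)), β > 0, is strictly concave on (0,1),
tends to 0 as τ → 0⁺ and as τ → 1⁻, and attains a unique interior maximum. -/
theorem R_concave_unique_max {β : ℝ} (hβ : 0 < β) :
    StrictConcaveOn ℝ (Set.Ioo (0:ℝ) 1)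
      (fun τ => ((1 - τ) / 2) * Real.logb 2 (1 + β * τ / (1 - τ))) ∧
    Filter.Tendsto (fun τ : ℝ => ((1 - τ) / 2) * Real.logb 2 (1 + β * τ / (1 - τ)))
      (nhdsWithin 0 (Set.Ioi 0)) (nhds 0) ∧
    Filter.Tendsto (fun τ : ℝ => ((1 - τ) / 2) * Real.logb 2 (1 + β * τ / (1 - τ)))
      (nhdsWithin 1 (Set.Iio 1)) (nhds 0) ∧
    ∃! τ₀ : ℝ, τ₀ ∈ Set.Ioo (0:ℝ) 1 ∧
      ∀ τ ∈ Set.Ioo (0:ℝ) 1,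
        ((1 - τ) / 2) * Real.logb 2 (1 + β * τ / (1 - τ)) ≤
        ((1 - τ₀) / 2) * Real.logb 2 (1 + β * τ₀ / (1 - τ₀)) := by
  set R := fun τ : ℝ => ((1 - τ) / 2) * Real.logb 2 (1 + β * τ / (1 - τ))
  have hR : R = fun τ => (2 * log 2)⁻¹ * rateNats β τ := by
    funext τ
    simp only [R, rateNats, logb]
    ring
  have hc : 0 < (2 * log 2)⁻¹ := by have := log_pos one_lt_two; positivity
  obtain ⟨hconc, h₀, h₁⟩ : StrictConcaveOn ℝ (Ioo 0 1) R ∧ Tendsto R (𝓝[>] 0) (𝓝 0) ∧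
      Tendsto R (𝓝[<] 1) (𝓝 0) := by
    rw [hR]
    refine ⟨(strictConcaveOn_rateNats hβ).const_mul hc, ?_, ?_⟩
    · simpa using (tendsto_rateNats_nhdsGT_zero β).const_mul (2 * log 2)⁻¹
    · simpa using (tendsto_rateNats_nhdsLT_one hβ).const_mul (2 * log 2)⁻¹
  exact ⟨hconc, h₀, h₁, hconc.existsUnique_isMaxOn_Ioo_of_tendsto zero_lt_one h₀ h₁⟩
end
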